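/- Let M be a left Sym V-comodule with coaction m ↦ m₍₋₁₎ ⊗ m₍₀₎. Then the map ρ : M → M ⊗ V defined by ρ(m) = − m₍₀₎ ⊗ pr_V(m₍₋₁₎) is a Lie coaction of V on M, i.e. the image of (ρ ⊗ id_V)∘ρ lies in M ⊗ Sym² V (the symmetric part of M ⊗ V ⊗ V). -/

import Mathlib

open TensorProduct

/-! ### The symmetric algebra of a module

Mathlib does not yet have the symmetric algebra, so we construct it as the
quotient of the tensor algebra by the commutativity relation. -/

/-- The relation on the tensor algebra whose quotient is the symmetric algebra. -/
inductive SymRel (R : Type*) [CommRing R] (V : Type*) [AddCommGroup V] [Module R V] :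
    TensorAlgebra R V → TensorAlgebra R V → Prop
  | mul_comm (a b : TensorAlgebra R V) : SymRel R V (a * b) (b * a)

/-- The symmetric algebra `Sym V` of an `R`-module `V`. -/
abbrev SymmAlg (R : Type*) [CommRing R] (V : Type*) [AddCommGroup V] [Module R V] : Type _ :=
  RingQuot (SymRel R V)

variable (R : Type*) [CommRing R] (V : Type*) [AddCommGroup V] [Module R V]

noncomputable instance : CommRing (SymmAlg R V) :=
  { (inferInstanceAs (Ring (RingQuot (SymRel R V))) : Ring (RingQuot (SymRel R V))) with
    mul_comm := by
      intro a b
      obtain ⟨x, rfl⟩ := RingQuot.mkRingHom_surjective (SymRel R V) a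
      obtain ⟨y, rfl⟩ := RingQuot.mkRingHom_surjective (SymRel R V) b
      rw [← map_mul, ← map_mul, RingQuot.mkRingHom_rel (SymRel.mul_comm x y)] }

/-- The canonical inclusion `V →ₗ Sym V` of the generators. -/
noncomputable def ιS : V →ₗ[R] SymmAlg R V :=
  (RingQuot.mkAlgHom R (SymRel R V)).toLinearMap ∘ₗ TensorAlgebra.ι R

/-! Up to the two signs, which cancel, coassociativity rewrites the double coaction as
`m ↦ m₍₀₎ ⊗ τ((pr_V ⊗ pr_V)(Δ m₍₋₁₎))` with `τ` the flip of `V ⊗ V`. The coproduct `Δ` is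
cocommutative, since `τ ∘ Δ` and `Δ` are algebra maps out of `Sym V` agreeing on the
primitive generators, so this element is `τ`-invariant. -/

theorem SymmAlg.algHom_ext {R : Type*} [CommRing R] {V : Type*} [AddCommGroup V] [Module R V]
    {A : Type*} [Semiring A] [Algebra R A] {f g : SymmAlg R V →ₐ[R] A}
    (h : ∀ v, f (ιS R V v) = g (ιS R V v)) : f = g :=
  RingQuot.ringQuot_ext' R f g (TensorAlgebra.hom_ext (LinearMap.ext h))

theorem SymmAlg.comm_comp_eq_of_primitive {R : Type*} [CommRing R]
    {V : Type*} [AddCommGroup V] [Module R V]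
    (Δ : SymmAlg R V →ₐ[R] SymmAlg R V ⊗[R] SymmAlg R V)
    (hΔ : ∀ v : V, Δ (ιS R V v) = 1 ⊗ₜ[R] ιS R V v + ιS R V v ⊗ₜ[R] 1) :
    (TensorProduct.comm R (SymmAlg R V) (SymmAlg R V)).toLinearMap ∘ₗ Δ.toLinearMap
      = Δ.toLinearMap := by
  have h : (Algebra.TensorProduct.comm R (SymmAlg R V) (SymmAlg R V)).toAlgHom.comp Δ = Δ :=
    SymmAlg.algHom_ext fun v => by simp [hΔ, add_comm]
  exact congrArg AlgHom.toLinearMap h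

theorem TensorProduct.map_neg_left {R : Type*} [CommRing R] {M N P Q : Type*}
    [AddCommGroup M] [AddCommGroup N] [AddCommGroup P] [AddCommGroup Q]
    [Module R M] [Module R N] [Module R P] [Module R Q] (f : M →ₗ[R] N) (g : P →ₗ[R] Q) :
    TensorProduct.map (-f) g = -TensorProduct.map f g :=
  (mapBilinear (RingHom.id R) M P N Q).map_neg₂ f g

section Comodule

variable {R : Type*} [CommRing R] {C V M : Type*} [AddCommGroup C] [AddCommGroup V]
  [AddCommGroup M] [Module R C] [Module R V] [Module R M]

/-- For a coaction `L(m) = m₍₋₁₎ ⊗ m₍₀₎`, `swapProj p ∘ₗ L` is `m ↦ m₍₀₎ ⊗ p(m₍₋₁₎)`. -/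
noncomputable def swapProj (p : C →ₗ[R] V) : C ⊗[R] M →ₗ[R] M ⊗[R] V :=
  (TensorProduct.comm R V M).toLinearMap ∘ₗ TensorProduct.map p LinearMap.id

theorem swapProj_iterate (p : C →ₗ[R] V) (L : M →ₗ[R] C ⊗[R] M) :
    TensorProduct.map (swapProj p ∘ₗ L) LinearMap.id ∘ₗ swapProj p ∘ₗ L
      = (TensorProduct.comm R V (M ⊗[R] V)).toLinearMap
        ∘ₗ TensorProduct.map p (swapProj p) ∘ₗ TensorProduct.map LinearMap.id L ∘ₗ L := by
  have h : TensorProduct.map (swapProj p ∘ₗ L) LinearMap.id ∘ₗ swapProj p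
      = (TensorProduct.comm R V (M ⊗[R] V)).toLinearMap
        ∘ₗ TensorProduct.map p (swapProj p) ∘ₗ TensorProduct.map LinearMap.id L := by
    ext c m
    simp [swapProj]
  simp only [← LinearMap.comp_assoc, h]

theorem swapProj_comp_map {W : Type*} [AddCommGroup W] [Module R W]
    (p : C →ₗ[R] V) (f : W →ₗ[R] C) :
    swapProj (M := M) (p ∘ₗ f) = swapProj p ∘ₗ TensorProduct.map f LinearMap.id := by
  ext w m
  simp [swapProj]

theorem assoc_comp_swapProj_assoc (p : C →ₗ[R] V) :
    (TensorProduct.assoc R M V V).toLinearMap ∘ₗ (TensorProduct.comm R V (M ⊗[R] V)).toLinearMap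
        ∘ₗ TensorProduct.map p (swapProj p) ∘ₗ (TensorProduct.assoc R C C M).toLinearMap
      = swapProj ((TensorProduct.comm R V V).toLinearMap ∘ₗ TensorProduct.map p p) := by
  ext s t m
  simp [swapProj]

theorem swapProj_iterate_of_coassoc (Δ : C →ₗ[R] C ⊗[R] C) (p : C →ₗ[R] V)
    (L : M →ₗ[R] C ⊗[R] M)
    (hL : (TensorProduct.assoc R C C M).toLinearMap ∘ₗ TensorProduct.map Δ LinearMap.id ∘ₗ L
      = TensorProduct.map LinearMap.id L ∘ₗ L) :
    (TensorProduct.assoc R M V V).toLinearMap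
        ∘ₗ TensorProduct.map (swapProj p ∘ₗ L) LinearMap.id ∘ₗ swapProj p ∘ₗ L
      = swapProj ((TensorProduct.comm R V V).toLinearMap ∘ₗ TensorProduct.map p p ∘ₗ Δ) ∘ₗ L := by
  rw [swapProj_iterate, ← hL, ← LinearMap.comp_assoc Δ, swapProj_comp_map,
    ← assoc_comp_swapProj_assoc]
  simp only [LinearMap.comp_assoc]

theorem map_id_comp_swapProj {W : Type*} [AddCommGroup W] [Module R W]
    (p : C →ₗ[R] V) (f : V →ₗ[R] W) :
    TensorProduct.map LinearMap.id f ∘ₗ swapProj (M := M) p = swapProj (f ∘ₗ p) := by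
  ext c m
  simp [swapProj]

theorem swapProj_iterate_comm (Δ : C →ₗ[R] C ⊗[R] C) (p : C →ₗ[R] V) (L : M →ₗ[R] C ⊗[R] M)
    (hΔ : (TensorProduct.comm R C C).toLinearMap ∘ₗ Δ = Δ)
    (hL : (TensorProduct.assoc R C C M).toLinearMap ∘ₗ TensorProduct.map Δ LinearMap.id ∘ₗ L
      = TensorProduct.map LinearMap.id L ∘ₗ L) :
    TensorProduct.map LinearMap.id (TensorProduct.comm R V V).toLinearMap
        ∘ₗ ((TensorProduct.assoc R M V V).toLinearMap
          ∘ₗ TensorProduct.map (swapProj p ∘ₗ L) LinearMap.id ∘ₗ swapProj p ∘ₗ L)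
      = (TensorProduct.assoc R M V V).toLinearMap
          ∘ₗ TensorProduct.map (swapProj p ∘ₗ L) LinearMap.id ∘ₗ swapProj p ∘ₗ L := by
  have hsymm : (TensorProduct.comm R V V).toLinearMap ∘ₗ TensorProduct.map p p ∘ₗ Δ
      = TensorProduct.map p p ∘ₗ Δ := by
    rw [← LinearMap.comp_assoc, ← TensorProduct.map_comp_comm_eq, LinearMap.comp_assoc, hΔ]
  rw [swapProj_iterate_of_coassoc Δ p L hL, ← LinearMap.comp_assoc, map_id_comp_swapProj,
    hsymm, hsymm]

end Comodule

theorem infinitesimal_lie_coaction_general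
    {R : Type*} [CommRing R]
    {V : Type*} [AddCommGroup V] [Module R V]
    {M : Type*} [AddCommGroup M] [Module R M]
    (Δ : SymmAlg R V →ₐ[R] SymmAlg R V ⊗[R] SymmAlg R V)
    (hΔ : ∀ v : V, Δ (ιS R V v) = 1 ⊗ₜ[R] ιS R V v + ιS R V v ⊗ₜ[R] 1)
    (prV : SymmAlg R V →ₗ[R] V)
    (L : M →ₗ[R] SymmAlg R V ⊗[R] M)
    (hL1 : (TensorProduct.assoc R (SymmAlg R V) (SymmAlg R V) M).toLinearMap
        ∘ₗ TensorProduct.map Δ.toLinearMap LinearMap.id ∘ₗ L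
      = TensorProduct.map LinearMap.id L ∘ₗ L)
    (ρ : M →ₗ[R] M ⊗[R] V)
    (hρ : ρ = -((TensorProduct.comm R V M).toLinearMap
        ∘ₗ TensorProduct.map prV LinearMap.id ∘ₗ L)) :
    TensorProduct.map (LinearMap.id : M →ₗ[R] M) (TensorProduct.comm R V V).toLinearMap
        ∘ₗ ((TensorProduct.assoc R M V V).toLinearMap
            ∘ₗ TensorProduct.map ρ LinearMap.id ∘ₗ ρ)
      = (TensorProduct.assoc R M V V).toLinearMap
          ∘ₗ TensorProduct.map ρ LinearMap.id ∘ₗ ρ := by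
  have hρ' : ρ = -(swapProj prV ∘ₗ L) := hρ
  have hsign : TensorProduct.map ρ LinearMap.id ∘ₗ ρ
      = TensorProduct.map (swapProj prV ∘ₗ L) LinearMap.id ∘ₗ swapProj prV ∘ₗ L := by
    rw [hρ', TensorProduct.map_neg_left, LinearMap.neg_comp, LinearMap.comp_neg]
    exact neg_neg (TensorProduct.map (swapProj prV ∘ₗ L) LinearMap.id ∘ₗ swapProj prV ∘ₗ L)
  rw [hsign]
  exact swapProj_iterate_comm Δ.toLinearMap prV L (SymmAlg.comm_comp_eq_of_primitive Δ hΔ) hL1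

/-- **The infinitesimal Lie coaction of a `Sym V`-comodule.**
Let `M` be a left `Sym V`-comodule, with coassociative counital coaction
`L(m) = m₍₋₁₎ ⊗ m₍₀₎` (relative to the shuffle coproduct `Δ` and its counit `ε`),
and let `pr_V : Sym V → V` be the projection onto symmetric degree one.  Then
`ρ : M → M ⊗ V`, `ρ(m) = − m₍₀₎ ⊗ pr_V(m₍₋₁₎)`, is a Lie coaction of the abelian Lie
coalgebra `V` on `M`: the image of `(ρ ⊗ id_V) ∘ ρ` lies in `M ⊗ Sym² V`, i.e. it is
invariant under the flip of the last two tensor factors. -/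
theorem infinitesimal_lie_coaction
    {R : Type*} [CommRing R] [Algebra ℚ R]
    {V : Type*} [AddCommGroup V] [Module R V]
    {M : Type*} [AddCommGroup M] [Module R M]
    (Δ : SymmAlg R V →ₐ[R] SymmAlg R V ⊗[R] SymmAlg R V)
    (hΔ : ∀ v : V, Δ (ιS R V v) = 1 ⊗ₜ[R] ιS R V v + ιS R V v ⊗ₜ[R] 1)
    (ε : SymmAlg R V →ₐ[R] R) (hε : ∀ v : V, ε (ιS R V v) = 0)
    (prV : SymmAlg R V →ₗ[R] V)
    (hprV1 : ∀ v : V, prV (ιS R V v) = v)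
    (hprV0 : ∀ (s : ℕ) (x : Fin s → V), s ≠ 1 → prV (∏ j, ιS R V (x j)) = 0)
    (L : M →ₗ[R] SymmAlg R V ⊗[R] M)
    (hL1 : (TensorProduct.assoc R (SymmAlg R V) (SymmAlg R V) M).toLinearMap
        ∘ₗ TensorProduct.map Δ.toLinearMap LinearMap.id ∘ₗ L
      = TensorProduct.map LinearMap.id L ∘ₗ L)
    (hL2 : (TensorProduct.lid R M).toLinearMap
        ∘ₗ TensorProduct.map ε.toLinearMap LinearMap.id ∘ₗ L = LinearMap.id)
    (ρ : M →ₗ[R] M ⊗[R] V)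
    (hρ : ρ = -((TensorProduct.comm R V M).toLinearMap
        ∘ₗ TensorProduct.map prV LinearMap.id ∘ₗ L)) :
    TensorProduct.map (LinearMap.id : M →ₗ[R] M) (TensorProduct.comm R V V).toLinearMap
        ∘ₗ ((TensorProduct.assoc R M V V).toLinearMap
            ∘ₗ TensorProduct.map ρ LinearMap.id ∘ₗ ρ)
      = (TensorProduct.assoc R M V V).toLinearMap
          ∘ₗ TensorProduct.map ρ LinearMap.id ∘ₗ ρ :=
  infinitesimal_lie_coaction_general Δ hΔ prV L hL1 ρ hρ
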